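/- arXiv:1508.01569 — 3 statements merged into one kernel-verified Lean document; each statement's English description precedes it below -/
import Mathlib

section
/- For an integer t ≥ 5 and distinct odd elements k_1, …, k_w of Z_{2t}, the graph S_{2t}(k_1,…,k_w) has girth at least 6 if and only if all differences k_i − k_j for i ≠ j are pairwise distinct in Z_{2t}. -/
/-- The graph `S_n(k_1,…,k_w)` on `ZMod n`: edges join an even-labeled vertex `a`
to `a + k` for each `k ∈ K`. -/
def SGraph (n : ℕ) (K : Set (ZMod n)) : SimpleGraph (ZMod n) where
  Adj a b := a ≠ b ∧ ((Even a.val ∧ b - a ∈ K) ∨ (Even b.val ∧ a - b ∈ K))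
  symm := by
    constructor
    rintro a b ⟨h1, h2⟩
    exact ⟨h1.symm, h2.symm⟩
  loopless := ⟨fun a h => h.1 rfl⟩

/-- The graph `S_n(P,Q; k_1,…,k_w)` on `ZMod n`: the graph `S_n(k_1,…,k_w)` together with
the edges `{2v, 2v+P}` on even vertices and `{2v+1, 2v+1+Q}` on odd vertices. -/
def SPQGraph (n : ℕ) (P Q : ZMod n) (K : Set (ZMod n)) : SimpleGraph (ZMod n) where
  Adj a b := a ≠ b ∧ (((Even a.val ∧ b - a ∈ K) ∨ (Even b.val ∧ a - b ∈ K))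
    ∨ (Even a.val ∧ Even b.val ∧ (b - a = P ∨ a - b = P))
    ∨ (Odd a.val ∧ Odd b.val ∧ (b - a = Q ∨ a - b = Q)))
  symm := by
    constructor
    rintro a b ⟨h1, h2⟩
    refine ⟨h1.symm, ?_⟩
    rcases h2 with h | ⟨ha, hb, h⟩ | ⟨ha, hb, h⟩
    · exact Or.inl h.symm
    · exact Or.inr (Or.inl ⟨hb, ha, h.symm⟩)
    · exact Or.inr (Or.inr ⟨hb, ha, h.symm⟩)
  loopless := ⟨fun a h => h.1 rfl⟩

/-- The infinite analogue `S_∞(P,Q; k_1,…,k_w)` on `ℤ`. -/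
def SPQGraphZ (P Q : ℤ) (K : Set ℤ) : SimpleGraph ℤ where
  Adj a b := a ≠ b ∧ (((Even a ∧ b - a ∈ K) ∨ (Even b ∧ a - b ∈ K))
    ∨ (Even a ∧ Even b ∧ (b - a = P ∨ a - b = P))
    ∨ (Odd a ∧ Odd b ∧ (b - a = Q ∨ a - b = Q)))
  symm := by
    constructor
    rintro a b ⟨h1, h2⟩
    refine ⟨h1.symm, ?_⟩
    rcases h2 with h | ⟨ha, hb, h⟩ | ⟨ha, hb, h⟩
    · exact Or.inl h.symm
    · exact Or.inr (Or.inl ⟨hb, ha, h.symm⟩)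
    · exact Or.inr (Or.inr ⟨hb, ha, h.symm⟩)
  loopless := ⟨fun a h => h.1 rfl⟩

/-- The Cayley colors of a graph on `ZMod n`: differences of adjacent vertices. -/
def cayleyColors {n : ℕ} (G : SimpleGraph (ZMod n)) : Set (ZMod n) :=
  {c | ∃ a b, G.Adj a b ∧ c = a - b}

/-
All generators are odd, so every edge joins an even and an odd vertex: the graph is bipartite,
its cycles are even, and girth at least 6 just means there is no 4-cycle. A 4-cycle starting at an
even vertex `x` runs `x, x + k₁, x + k₁ - k₂, x + k₁ - k₂ + k₃` and closes up with `k₄`, i.e. gives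
`k₁ - k₂ = k₄ - k₃` with `k₁ ≠ k₂` and `k₁ ≠ k₄` (the vertices are distinct); conversely such a
coincidence yields the 4-cycle `0, k₁, k₁ - k₂, k₄`.
-/

namespace SimpleGraph

variable {V : Type*} {G : SimpleGraph V}

lemma exists_isCycle_length_four_iff :
    (∃ u, ∃ w : G.Walk u u, w.IsCycle ∧ w.length = 4) ↔
      ∃ a b c d, G.Adj a b ∧ G.Adj b c ∧ G.Adj c d ∧ G.Adj d a ∧ a ≠ c ∧ b ≠ d := by
  constructor
  · rintro ⟨u, w, hw, hlen⟩
    match w, hlen with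
    | .cons h₁ (.cons h₂ (.cons h₃ (.cons h₄ .nil))), _ =>
      have hnodup := hw.support_nodup
      simp only [Walk.support_cons, Walk.support_nil, List.tail_cons, List.nodup_cons,
        List.mem_cons, List.not_mem_nil] at hnodup
      exact ⟨_, _, _, _, h₁, h₂, h₃, h₄, by tauto, by tauto⟩
  · rintro ⟨a, b, c, d, hab, hbc, hcd, hda, hac, hbd⟩
    refine ⟨a, .cons hab (.cons hbc (.cons hcd (.cons hda .nil))), ?_, rfl⟩
    have := hab.ne; have := hbc.ne; have := hcd.ne; have := hda.ne
    simp only [Walk.cons_isCycle_iff, Walk.cons_isPath_iff, Walk.isPath_iff_nil, Walk.nil_nil,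
      Walk.support_nil, List.mem_cons, List.not_mem_nil, or_false, true_and, Walk.support_cons,
      not_or, Walk.edges_cons, Walk.edges_nil, Sym2.eq, Sym2.rel_iff', Prod.mk.injEq,
      Prod.swap_prod_mk, and_true, not_and]
    tauto

lemma Colorable.six_le_egirth_iff (hG : G.Colorable 2) :
    6 ≤ G.egirth ↔ ¬ ∃ u, ∃ w : G.Walk u u, w.IsCycle ∧ w.length = 4 := by
  rw [le_egirth]
  refine ⟨fun h ⟨u, w, hw, hlen⟩ => absurd (h u w hw) (by norm_num [hlen]), fun h u w hw => ?_⟩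
  obtain ⟨m, hm⟩ := two_colorable_iff_forall_loop_even.1 hG u w
  have h3 := hw.three_le_length
  have h4 : w.length ≠ 4 := fun hlen => h ⟨u, w, hw, hlen⟩
  norm_cast
  omega

end SimpleGraph

lemma ZMod.natCast_val_sub_of_two_dvd {n : ℕ} [NeZero n] (hn : 2 ∣ n) (a b : ZMod n) :
    ((a - b).val : ZMod 2) = a.val - b.val := by
  simp only [ZMod.natCast_val, ZMod.cast_sub hn]

lemma ZMod.even_val_sub_of_odd {n : ℕ} [NeZero n] (hn : 2 ∣ n) {a b : ZMod n} (ha : Odd a.val)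
    (hb : Odd b.val) : Even (a - b).val := by
  rw [← ZMod.natCast_eq_zero_iff_even, ZMod.natCast_val_sub_of_two_dvd hn,
    ZMod.natCast_eq_one_iff_odd.2 ha, ZMod.natCast_eq_one_iff_odd.2 hb, sub_self]

namespace SGraph

open SimpleGraph

variable {n : ℕ} {K : Set (ZMod n)}

lemma adj_of_sub_mem (hK : ∀ k ∈ K, Odd k.val) {a b : ZMod n} (ha : Even a.val) (hk : b - a ∈ K) :
    (SGraph n K).Adj a b := by
  refine ⟨fun hab => ?_, Or.inl ⟨ha, hk⟩⟩
  simpa [hab] using hK _ hk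

variable [NeZero n]

lemma natCast_val_ne_of_adj (hn : 2 ∣ n) (hK : ∀ k ∈ K, Odd k.val) {a b : ZMod n}
    (h : (SGraph n K).Adj a b) :
    (a.val : ZMod 2) ≠ b.val := by
  rcases h.2 with ⟨-, hk⟩ | ⟨-, hk⟩
  · refine (sub_ne_zero.1 ?_).symm
    rw [← ZMod.natCast_val_sub_of_two_dvd hn, ZMod.natCast_eq_one_iff_odd.2 (hK _ hk)]
    exact one_ne_zero
  · refine sub_ne_zero.1 ?_
    rw [← ZMod.natCast_val_sub_of_two_dvd hn, ZMod.natCast_eq_one_iff_odd.2 (hK _ hk)]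
    exact one_ne_zero

lemma colorable_two (hn : 2 ∣ n) (hK : ∀ k ∈ K, Odd k.val) : (SGraph n K).Colorable 2 := by
  simpa using
    (Coloring.mk (fun x : ZMod n => (x.val : ZMod 2)) (natCast_val_ne_of_adj hn hK)).colorable

lemma even_val_iff_not_of_adj (hn : 2 ∣ n) (hK : ∀ k ∈ K, Odd k.val) {a b : ZMod n}
    (h : (SGraph n K).Adj a b) :
    Even a.val ↔ ¬ Even b.val := by
  have := natCast_val_ne_of_adj hn hK h
  rw [← ZMod.natCast_eq_zero_iff_even, ← ZMod.natCast_eq_zero_iff_even]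
  generalize (a.val : ZMod 2) = x at this
  generalize (b.val : ZMod 2) = y at this
  revert x y
  decide

lemma sub_mem_of_adj (hn : 2 ∣ n) (hK : ∀ k ∈ K, Odd k.val) {a b : ZMod n}
    (h : (SGraph n K).Adj a b) (ha : Even a.val) : b - a ∈ K :=
  (h.2.resolve_right fun hb => (even_val_iff_not_of_adj hn hK h).1 ha hb.1).2

lemma square_of_sub_eq (hn : 2 ∣ n) (hK : ∀ k ∈ K, Odd k.val) {a b c d : ZMod n}
    (ha : a ∈ K) (hb : b ∈ K) (hc : c ∈ K) (hd : d ∈ K) (hab : a ≠ b) (hne : (a, b) ≠ (c, d))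
    (h : a - b = c - d) :
    ∃ x y z w, (SGraph n K).Adj x y ∧ (SGraph n K).Adj y z ∧ (SGraph n K).Adj z w ∧
      (SGraph n K).Adj w x ∧ x ≠ z ∧ y ≠ w := by
  have h0 : Even (0 : ZMod n).val := by simp
  have hab' : Even (a - b).val := ZMod.even_val_sub_of_odd hn (hK a ha) (hK b hb)
  refine ⟨0, a, a - b, c, adj_of_sub_mem hK h0 (by simpa using ha),
    (adj_of_sub_mem hK hab' (by simpa using hb)).symm,
    adj_of_sub_mem hK hab' (by rwa [h, sub_sub_cancel]),
    (adj_of_sub_mem hK h0 (by simpa using hc)).symm, fun h0ab => hab ?_, fun hac => hne ?_⟩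
  · exact sub_eq_zero.1 h0ab.symm
  · obtain rfl : b = d := by linear_combination hac - h
    rw [hac]

lemma sub_eq_sub_of_square (hn : 2 ∣ n) (hK : ∀ k ∈ K, Odd k.val) {a b c d : ZMod n}
    (h₁ : (SGraph n K).Adj a b) (h₂ : (SGraph n K).Adj b c) (h₃ : (SGraph n K).Adj c d)
    (h₄ : (SGraph n K).Adj d a) (hac : a ≠ c) (hbd : b ≠ d) :
    ∃ k₁ ∈ K, ∃ k₂ ∈ K, ∃ k₃ ∈ K, ∃ k₄ ∈ K,
      k₁ ≠ k₂ ∧ k₃ ≠ k₄ ∧ (k₁, k₂) ≠ (k₃, k₄) ∧ k₁ - k₂ = k₃ - k₄ := by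
  wlog ha : Even a.val generalizing a b c d
  · have hab := even_val_iff_not_of_adj hn hK h₁
    exact this h₂ h₃ h₄ h₁ hbd hac.symm (by tauto)
  have hc : Even c.val := by
    have := even_val_iff_not_of_adj hn hK h₁
    have := even_val_iff_not_of_adj hn hK h₂
    tauto
  refine ⟨b - a, sub_mem_of_adj hn hK h₁ ha, b - c, sub_mem_of_adj hn hK h₂.symm hc,
    d - a, sub_mem_of_adj hn hK h₄.symm ha, d - c, sub_mem_of_adj hn hK h₃ hc,
    fun h => hac (sub_right_injective h), fun h => hac (sub_right_injective h),
    fun h => hbd (sub_left_injective (congrArg Prod.fst h)), by ring⟩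

end SGraph

/-- For t ≥ 5 and distinct odd elements k_1,…,k_w of Z_{2t}, the graph
S_{2t}(k_1,…,k_w) has girth at least 6 iff all differences k_i − k_j (i ≠ j)
are pairwise distinct in Z_{2t}. -/
theorem stmt2 (t : ℕ) (ht : 5 ≤ t) (K : Finset (ZMod (2 * t)))
    (hodd : ∀ k ∈ K, Odd k.val) :
    6 ≤ (SGraph (2 * t) (K : Set (ZMod (2 * t)))).egirth ↔
      ∀ a ∈ K, ∀ b ∈ K, ∀ c ∈ K, ∀ d ∈ K,
        a ≠ b → c ≠ d → (a, b) ≠ (c, d) → a - b ≠ c - d := by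
  have : NeZero (2 * t) := ⟨by omega⟩
  have hn : 2 ∣ 2 * t := dvd_mul_right 2 t
  rw [(SGraph.colorable_two hn hodd).six_le_egirth_iff, SimpleGraph.exists_isCycle_length_four_iff]
  constructor
  · intro hsquare a ha b hb c hc d hd hab _ hne h
    exact hsquare (SGraph.square_of_sub_eq hn hodd ha hb hc hd hab hne h)
  · rintro hdistinct ⟨a, b, c, d, h₁, h₂, h₃, h₄, hac, hbd⟩
    obtain ⟨k₁, hk₁, k₂, hk₂, k₃, hk₃, k₄, hk₄, h₁₂, h₃₄, hne, h⟩ :=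
      SGraph.sub_eq_sub_of_square hn hodd h₁ h₂ h₃ h₄ hac hbd
    exact hdistinct k₁ hk₁ k₂ hk₂ k₃ hk₃ k₄ hk₄ h₁₂ h₃₄ hne h
end

section
/- The graph S_{2t}(P,Q; k_1,…,k_w) has girth at least 5 if and only if: (i) 3P, 4P, 3Q, 4Q are all nonzero in Z_{2t}; (ii) all differences k_i − k_j with i ≠ j are pairwise distinct in Z_{2t}; and (iii) no relation k_i − k_j = ω − ω′ holds with ω, ω′ ∈ {0, ±P, ±Q} (and k_i − k_j ≠ 0 when i ≠ j). -/
namespace ZMod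

theorem eq_zero_or_eq_one (e : ZMod 2) : e = 0 ∨ e = 1 := by
  decide +revert

theorem triangle_parity_cases (a b c : ZMod 2) :
    (a = b ∧ b = c) ∨ (b = c ∧ a ≠ b) ∨ (c = a ∧ b ≠ c) ∨ (a = b ∧ c ≠ a) := by
  decide +revert

/-- Up to rotation, a `2`-colouring of a `4`-cycle is constant, has exactly one vertex of the
other colour, consists of two blocks of adjacent vertices, or alternates. -/
theorem square_parity_cases (a b c d : ZMod 2) :
    (a = b ∧ b = c ∧ c = d) ∨
    (b = c ∧ c = d ∧ a ≠ b) ∨ (c = d ∧ d = a ∧ b ≠ c) ∨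
    (d = a ∧ a = b ∧ c ≠ d) ∨ (a = b ∧ b = c ∧ d ≠ a) ∨
    (a = b ∧ c = d ∧ a ≠ c) ∨ (b = c ∧ d = a ∧ b ≠ d) ∨
    (a = c ∧ b = d ∧ a ≠ b) := by
  decide +revert

variable {n : ℕ} (hn : 2 ∣ n)

theorem castHom_eq_of_sub_mem {u v s : ZMod n} (hs : castHom hn (ZMod 2) s = 0)
    (h : v - u ∈ ({0, s, -s} : Set (ZMod n))) :
    castHom hn (ZMod 2) v = castHom hn (ZMod 2) u := by
  rw [← sub_eq_zero, ← map_sub]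
  simp only [Set.mem_insert_iff, Set.mem_singleton_iff] at h
  rcases h with h | h | h <;> simp only [h, map_zero, map_neg, hs, neg_zero]

theorem even_val_iff_castHom_eq_zero [NeZero n] (a : ZMod n) :
    Even a.val ↔ castHom hn (ZMod 2) a = 0 := by
  rw [castHom_apply, cast_eq_val, natCast_eq_zero_iff_even]

theorem odd_val_iff_castHom_eq_one [NeZero n] (a : ZMod n) :
    Odd a.val ↔ castHom hn (ZMod 2) a = 1 := by
  rw [castHom_apply, cast_eq_val, natCast_eq_one_iff_odd]

end ZMod

section SignedSums

variable {R : Type*} [CommRing R] {p q a b c d : R}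

theorem three_mul_eq_zero_of_add_eq_zero (ha : a = p ∨ a = -p) (hb : b = p ∨ b = -p)
    (hc : c = p ∨ c = -p) (ha0 : a ≠ 0) (h : a + b + c = 0) : 3 * p = 0 := by
  rcases ha with rfl | rfl <;> rcases hb with rfl | rfl <;> rcases hc with rfl | rfl <;>
    first
    | linear_combination h
    | linear_combination -h
    | exact absurd (by linear_combination h) ha0
    | exact absurd (by linear_combination -h) ha0

theorem four_mul_eq_zero_or_of_add_eq_zero (ha : a = p ∨ a = -p) (hb : b = p ∨ b = -p)
    (hc : c = p ∨ c = -p) (hd : d = p ∨ d = -p) (h : a + b + c + d = 0) :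
    4 * p = 0 ∨ a + b = 0 ∨ b + c = 0 := by
  rcases ha with rfl | rfl <;> rcases hb with rfl | rfl <;> rcases hc with rfl | rfl <;>
    rcases hd with rfl | rfl <;>
    first
    | (right; left; ring1)
    | (right; right; ring1)
    | (left; linear_combination h)
    | (left; linear_combination -h)
    | (left; linear_combination 2 * h)
    | (left; linear_combination -2 * h)

theorem ne_of_eq_or_eq_neg (ha : a = p ∨ a = -p) (hb : b = q ∨ b = -q) (hpq : p ≠ q)
    (hpq' : p ≠ -q) : a ≠ b := by
  rcases ha with rfl | rfl <;> rcases hb with rfl | rfl <;> intro h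
  · exact hpq h
  · exact hpq' h
  · exact hpq' (by rw [← h, neg_neg])
  · exact hpq (neg_inj.1 h)

end SignedSums

namespace SimpleGraph

variable {V : Type*} {G : SimpleGraph V} {u v w x y z : V}

structure IsFourCycle (G : SimpleGraph V) (u v w x : V) : Prop where
  ne_uw : u ≠ w
  ne_vx : v ≠ x
  adj_uv : G.Adj u v
  adj_vw : G.Adj v w
  adj_wx : G.Adj w x
  adj_xu : G.Adj x u

theorem IsFourCycle.rotate (h : G.IsFourCycle u v w x) : G.IsFourCycle v w x u :=
  ⟨h.ne_vx, h.ne_uw.symm, h.adj_vw, h.adj_wx, h.adj_xu, h.adj_uv⟩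

theorem five_le_egirth_iff :
    5 ≤ G.egirth ↔ (∀ u v w, G.Adj u v → G.Adj v w → ¬G.Adj w u) ∧
      ∀ u v w x, ¬G.IsFourCycle u v w x := by
  constructor
  · intro h
    refine ⟨fun u v w huv hvw hwu => ?_, fun u v w x ⟨huw, hvx, huv, hvw, hwx, hxu⟩ => ?_⟩
    · have hc : (Walk.cons huv <| .cons hvw <| .cons hwu .nil).IsCycle := by
        simp [Walk.cons_isCycle_iff, huv.ne, hvw.ne, hwu.ne, hwu.ne', huv.ne']
      exact absurd (h.trans (egirth_le_length hc)) (by norm_num)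
    · have hc : (Walk.cons huv <| .cons hvw <| .cons hwx <| .cons hxu .nil).IsCycle := by
        simp [Walk.cons_isCycle_iff, huv.ne, hvw.ne, hwx.ne, hxu.ne, huv.ne', hxu.ne', huw,
          huw.symm, hvx]
      exact absurd (h.trans (egirth_le_length hc)) (by norm_num)
  · rintro ⟨htri, hsq⟩
    refine le_egirth.2 fun a c hc => ?_
    by_contra! hlt
    match c, hc.three_le_length with
    | .cons h₁ (.cons h₂ (.cons h₃ .nil)), _ => exact htri _ _ _ h₁ h₂ h₃
    | .cons h₁ (.cons h₂ (.cons h₃ (.cons h₄ .nil))), _ =>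
      have hs := hc.support_nodup
      simp at hs
      exact hsq _ _ _ _ ⟨by tauto, by tauto, h₁, h₂, h₃, h₄⟩
    | .cons _ (.cons _ (.cons _ (.cons _ (.cons _ _)))), _ =>
      simp only [Walk.length_cons] at hlt
      norm_cast at hlt

theorem false_of_adj_of_adj_of_detour (htri : ∀ u v w, G.Adj u v → G.Adj v w → ¬G.Adj w u)
    (hsq : ∀ u v w x, ¬G.IsFourCycle u v w x) (hxy : G.Adj x y) (hxz : G.Adj x z) (hyz : y ≠ z)
    (hwx : w ≠ x) (hyw : G.Adj y w ∨ y = w) (hzw : G.Adj z w ∨ z = w) : False := by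
  rcases hyw with hyw | rfl <;> rcases hzw with hzw | rfl
  · exact hsq x y w z ⟨hwx.symm, hyz, hxy, hyw, hzw.symm, hxz.symm⟩
  · exact htri x y z hxy hyw hxz.symm
  · exact htri x z y hxz hzw hxy.symm
  · exact hyz rfl

variable {α : Type*} [AddCommGroup α] {G : SimpleGraph α} {x s : α}

theorem three_nsmul_ne_zero_of_adj_add_nsmul
    (htri : ∀ u v w, G.Adj u v → G.Adj v w → ¬G.Adj w u)
    (h : ∀ m : ℕ, G.Adj (x + m • s) (x + (m + 1) • s)) : 3 • s ≠ 0 := by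
  intro h3
  refine htri x (x + 1 • s) (x + 2 • s) (by simpa using h 0) (h 1) ?_
  simpa [h3] using h 2

theorem four_nsmul_ne_zero_of_adj_add_nsmul (hsq : ∀ u v w x, ¬G.IsFourCycle u v w x)
    (h : ∀ m : ℕ, G.Adj (x + m • s) (x + (m + 1) • s)) (h2 : 2 • s ≠ 0) : 4 • s ≠ 0 := by
  intro h4
  refine hsq x (x + 1 • s) (x + 2 • s) (x + 3 • s) ⟨by simpa using h2, ?_, by simpa using h 0,
    h 1, h 2, by simpa [h4] using h 3⟩
  rw [Ne, add_right_inj, show 3 = 1 + 2 from rfl, add_nsmul, left_eq_add]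
  exact h2

end SimpleGraph

namespace SPQGraph

section Conditions

variable {n : ℕ}

def offsets (P Q : ZMod n) : Set (ZMod n) := {0, P, -P, Q, -Q}

def HasDistinctDifferences (K : Set (ZMod n)) : Prop :=
  ∀ a ∈ K, ∀ b ∈ K, ∀ c ∈ K, ∀ d ∈ K, a ≠ b → c ≠ d → (a, b) ≠ (c, d) → a - b ≠ c - d

def DifferencesAvoid (K S : Set (ZMod n)) : Prop :=
  ∀ a ∈ K, ∀ b ∈ K, a ≠ b → ∀ ω ∈ S, ∀ ω' ∈ S, a - b ≠ ω - ω'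

theorem mem_or_mem_of_mem_offsets {P Q ω : ZMod n} (h : ω ∈ offsets P Q) :
    ω ∈ ({0, P, -P} : Set (ZMod n)) ∨ ω ∈ ({0, Q, -Q} : Set (ZMod n)) := by
  simp only [offsets, Set.mem_insert_iff, Set.mem_singleton_iff] at h ⊢
  tauto

end Conditions

variable {n : ℕ} [NeZero n] (hn : 2 ∣ n) {P Q : ZMod n} {K : Set (ZMod n)} {u v w x : ZMod n}

local notation "π" => ZMod.castHom hn (ZMod 2)
local notation:50 a:51 " ∼ " b:51 => SimpleGraph.Adj (SPQGraph n P Q K) a b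

theorem adj_iff_parity : u ∼ v ↔ u ≠ v ∧
    (((π u = 0 ∧ v - u ∈ K) ∨ (π v = 0 ∧ u - v ∈ K)) ∨
      (π u = 0 ∧ π v = 0 ∧ (v - u = P ∨ u - v = P)) ∨
      (π u = 1 ∧ π v = 1 ∧ (v - u = Q ∨ u - v = Q))) := by
  simp only [SPQGraph, ZMod.even_val_iff_castHom_eq_zero hn, ZMod.odd_val_iff_castHom_eq_one hn]

theorem sub_mem_of_adj (h : u ∼ v) (hu : π u = 0) (hv : π v = 1) : v - u ∈ K := by
  rw [adj_iff_parity hn] at h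
  rcases h with ⟨-, (⟨-, h⟩ | ⟨hv', -⟩) | ⟨-, hv', -⟩ | ⟨hu', -⟩⟩ <;> simp_all

theorem adj_of_sub_mem (hK : ∀ k ∈ K, π k = 1) (hu : π u = 0) (h : v - u ∈ K) : u ∼ v := by
  refine (adj_iff_parity hn).2 ⟨fun huv => ?_, .inl (.inl ⟨hu, h⟩)⟩
  simpa [huv] using hK _ h

theorem sub_eq_or_of_adj_of_parity_eq (hK : ∀ k ∈ K, π k = 1) (h : u ∼ v) (huv : π u = π v) :
    (π u = 0 ∧ (v - u = P ∨ v - u = -P)) ∨ (π u = 1 ∧ (v - u = Q ∨ v - u = -Q)) := by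
  rw [adj_iff_parity hn] at h
  obtain ⟨-, (⟨-, hk⟩ | ⟨-, hk⟩) | ⟨hu, -, hP⟩ | ⟨hu, -, hQ⟩⟩ := h
  · exact absurd (hK _ hk) (by rw [map_sub, huv, sub_self]; decide)
  · exact absurd (hK _ hk) (by rw [map_sub, huv, sub_self]; decide)
  · exact .inl ⟨hu, hP.imp_right fun h => by rw [← h, neg_sub]⟩
  · exact .inr ⟨hu, hQ.imp_right fun h => by rw [← h, neg_sub]⟩

theorem sub_eq_or_of_adj_of_even (hK : ∀ k ∈ K, π k = 1) (h : u ∼ v) (hu : π u = 0)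
    (hv : π v = 0) : v - u = P ∨ v - u = -P :=
  (sub_eq_or_of_adj_of_parity_eq hn hK h (hu.trans hv.symm)).elim And.right
    fun h => absurd (hu.symm.trans h.1) (by decide)

theorem sub_eq_or_of_adj_of_odd (hK : ∀ k ∈ K, π k = 1) (h : u ∼ v) (hu : π u = 1)
    (hv : π v = 1) : v - u = Q ∨ v - u = -Q :=
  (sub_eq_or_of_adj_of_parity_eq hn hK h (hu.trans hv.symm)).elim
    (fun h => absurd (hu.symm.trans h.1) (by decide)) And.right

theorem sub_mem_offsets_of_adj (hK : ∀ k ∈ K, π k = 1) (h : u ∼ v) (huv : π u = π v) :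
    v - u ∈ offsets P Q := by
  simp only [offsets, Set.mem_insert_iff, Set.mem_singleton_iff]
  rcases sub_eq_or_of_adj_of_parity_eq hn hK h huv with ⟨-, h | h⟩ | ⟨-, h | h⟩ <;> simp [h]

theorem sub_ne_sub_of_adj_of_adj (hK : ∀ k ∈ K, π k = 1) (hPQ : P ≠ Q) (hPQ' : P ≠ -Q)
    (huv : u ∼ v) (hxw : x ∼ w) (hu : π u = π v) (hx : π x = π w) (hux : π u ≠ π x) :
    v - u ≠ w - x := by
  rcases sub_eq_or_of_adj_of_parity_eq hn hK huv hu with ⟨hu0, h⟩ | ⟨hu1, h⟩ <;>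
    rcases sub_eq_or_of_adj_of_parity_eq hn hK hxw hx with ⟨hx0, h'⟩ | ⟨hx1, h'⟩
  · exact absurd (hu0.trans hx0.symm) hux
  · exact ne_of_eq_or_eq_neg h h' hPQ hPQ'
  · exact (ne_of_eq_or_eq_neg h' h hPQ hPQ').symm
  · exact absurd (hu1.trans hx1.symm) hux

theorem adj_or_eq_of_sub_mem_of_even (hP : π P = 0) (hu : π u = 0)
    (h : v - u ∈ ({0, P, -P} : Set (ZMod n))) : u ∼ v ∨ u = v := by
  refine or_iff_not_imp_right.2 fun huv => (adj_iff_parity hn).2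
    ⟨huv, .inr (.inl ⟨hu, (ZMod.castHom_eq_of_sub_mem hn hP h).trans hu, ?_⟩)⟩
  simp only [Set.mem_insert_iff, Set.mem_singleton_iff] at h
  rcases h with h | h | h
  · exact absurd (sub_eq_zero.1 h).symm huv
  · exact .inl h
  · exact .inr (by rw [← neg_sub, h, neg_neg])

theorem adj_or_eq_of_sub_mem_of_odd (hQ : π Q = 0) (hu : π u = 1)
    (h : v - u ∈ ({0, Q, -Q} : Set (ZMod n))) : u ∼ v ∨ u = v := by
  refine or_iff_not_imp_right.2 fun huv => (adj_iff_parity hn).2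
    ⟨huv, .inr (.inr ⟨hu, (ZMod.castHom_eq_of_sub_mem hn hQ h).trans hu, ?_⟩)⟩
  simp only [Set.mem_insert_iff, Set.mem_singleton_iff] at h
  rcases h with h | h | h
  · exact absurd (sub_eq_zero.1 h).symm huv
  · exact .inl h
  · exact .inr (by rw [← neg_sub, h, neg_neg])

/-- `k` and `k'` are the labels of the two edges, read from their even ends. -/
theorem exists_sub_eq_sub_of_adj_of_adj (hux : u ∼ x) (hvw : v ∼ w) (huv : π u = π v)
    (hxw : π x = π w) (hux' : π u ≠ π x) : ∃ k ∈ K, ∃ k' ∈ K, (w - x) - (v - u) = k - k' := by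
  rcases ZMod.eq_zero_or_eq_one (π u) with hu | hu
  · have hx : π x = 1 := (ZMod.eq_zero_or_eq_one _).resolve_left (hu ▸ hux').symm
    exact ⟨w - v, sub_mem_of_adj hn hvw (huv ▸ hu) (hxw ▸ hx), x - u,
      sub_mem_of_adj hn hux hu hx, by ring⟩
  · have hx : π x = 0 := (ZMod.eq_zero_or_eq_one _).resolve_right (hu ▸ hux').symm
    exact ⟨u - x, sub_mem_of_adj hn hux.symm hx hu, v - w,
      sub_mem_of_adj hn hvw.symm (hxw ▸ hx) (huv ▸ hu), by ring⟩

theorem three_mul_eq_zero_of_adj_of_even (hK : ∀ k ∈ K, π k = 1) (huv : u ∼ v) (hvw : v ∼ w)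
    (hwu : w ∼ u) (hu : π u = 0) (hv : π v = 0) (hw : π w = 0) : 3 * P = 0 :=
  three_mul_eq_zero_of_add_eq_zero (sub_eq_or_of_adj_of_even hn hK huv hu hv)
    (sub_eq_or_of_adj_of_even hn hK hvw hv hw) (sub_eq_or_of_adj_of_even hn hK hwu hw hu)
    (sub_ne_zero.2 huv.ne') (by ring)

theorem three_mul_eq_zero_of_adj_of_odd (hK : ∀ k ∈ K, π k = 1) (huv : u ∼ v) (hvw : v ∼ w)
    (hwu : w ∼ u) (hu : π u = 1) (hv : π v = 1) (hw : π w = 1) : 3 * Q = 0 :=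
  three_mul_eq_zero_of_add_eq_zero (sub_eq_or_of_adj_of_odd hn hK huv hu hv)
    (sub_eq_or_of_adj_of_odd hn hK hvw hv hw) (sub_eq_or_of_adj_of_odd hn hK hwu hw hu)
    (sub_ne_zero.2 huv.ne') (by ring)

theorem not_adj_of_adj_of_adj (hK : ∀ k ∈ K, π k = 1) (h3P : 3 * P ≠ 0) (h3Q : 3 * Q ≠ 0)
    (hoff : DifferencesAvoid K (offsets P Q)) (huv : u ∼ v) (hvw : v ∼ w) : ¬w ∼ u := by
  intro hwu
  have apex : ∀ {a b c}, a ∼ b → b ∼ c → c ∼ a → π b = π c → π a ≠ π b → False := by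
    intro a b c hab hbc hca hbc' hab'
    obtain ⟨k, hk, k', hk', hkk⟩ := exists_sub_eq_sub_of_adj_of_adj hn hab hca.symm rfl hbc' hab'
    have hcb : c - b = k - k' := by rw [← hkk]; ring
    exact hoff k hk k' hk' (fun h => hbc.ne' (sub_eq_zero.1 (by rw [hcb, h, sub_self])))
      _ (sub_mem_offsets_of_adj hn hK hbc hbc') 0 (by simp [offsets]) (by rw [sub_zero, hcb])
  rcases ZMod.triangle_parity_cases (π u) (π v) (π w) with
    ⟨h₁, h₂⟩ | ⟨h₁, h₂⟩ | ⟨h₁, h₂⟩ | ⟨h₁, h₂⟩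
  · rcases ZMod.eq_zero_or_eq_one (π u) with hu | hu
    · exact h3P (three_mul_eq_zero_of_adj_of_even hn hK huv hvw hwu hu (h₁ ▸ hu) (h₂ ▸ h₁ ▸ hu))
    · exact h3Q (three_mul_eq_zero_of_adj_of_odd hn hK huv hvw hwu hu (h₁ ▸ hu) (h₂ ▸ h₁ ▸ hu))
  · exact apex huv hvw hwu h₁ h₂
  · exact apex hvw hwu huv h₁ h₂
  · exact apex hwu huv hvw h₁ h₂

theorem four_mul_eq_zero_of_isFourCycle_of_even (hK : ∀ k ∈ K, π k = 1)
    (h : (SPQGraph n P Q K).IsFourCycle u v w x) (hu : π u = 0) (hv : π v = 0) (hw : π w = 0)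
    (hx : π x = 0) : 4 * P = 0 := by
  rcases four_mul_eq_zero_or_of_add_eq_zero (sub_eq_or_of_adj_of_even hn hK h.adj_uv hu hv)
    (sub_eq_or_of_adj_of_even hn hK h.adj_vw hv hw)
    (sub_eq_or_of_adj_of_even hn hK h.adj_wx hw hx)
    (sub_eq_or_of_adj_of_even hn hK h.adj_xu hx hu) (by ring) with h4 | huw | hvx
  · exact h4
  · exact absurd (by linear_combination -huw) h.ne_uw
  · exact absurd (by linear_combination -hvx) h.ne_vx

theorem four_mul_eq_zero_of_isFourCycle_of_odd (hK : ∀ k ∈ K, π k = 1)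
    (h : (SPQGraph n P Q K).IsFourCycle u v w x) (hu : π u = 1) (hv : π v = 1) (hw : π w = 1)
    (hx : π x = 1) : 4 * Q = 0 := by
  rcases four_mul_eq_zero_or_of_add_eq_zero (sub_eq_or_of_adj_of_odd hn hK h.adj_uv hu hv)
    (sub_eq_or_of_adj_of_odd hn hK h.adj_vw hv hw)
    (sub_eq_or_of_adj_of_odd hn hK h.adj_wx hw hx)
    (sub_eq_or_of_adj_of_odd hn hK h.adj_xu hx hu) (by ring) with h4 | huw | hvx
  · exact h4
  · exact absurd (by linear_combination -huw) h.ne_uw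
  · exact absurd (by linear_combination -hvx) h.ne_vx

theorem not_isFourCycle_of_one_parity_differs (hK : ∀ k ∈ K, π k = 1)
    (hoff : DifferencesAvoid K (offsets P Q)) (hvw : π v = π w) (hwx : π w = π x)
    (huv : π u ≠ π v) : ¬(SPQGraph n P Q K).IsFourCycle u v w x := by
  intro h
  obtain ⟨k, hk, k', hk', hkk⟩ :=
    exists_sub_eq_sub_of_adj_of_adj hn h.adj_uv h.adj_xu.symm rfl (hvw.trans hwx) huv
  have hxv : x - v = k - k' := by rw [← hkk]; ring
  exact hoff k hk k' hk' (fun e => h.ne_vx (sub_eq_zero.1 (by rw [hxv, e, sub_self])).symm)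
    _ (sub_mem_offsets_of_adj hn hK h.adj_wx hwx) _
    (sub_mem_offsets_of_adj hn hK h.adj_vw.symm hvw.symm) (by rw [← hxv]; ring)

theorem not_isFourCycle_of_two_parity_blocks (hK : ∀ k ∈ K, π k = 1) (hPQ : P ≠ Q)
    (hPQ' : P ≠ -Q) (hoff : DifferencesAvoid K (offsets P Q)) (huv : π u = π v)
    (hwx : π w = π x) (huw : π u ≠ π w) : ¬(SPQGraph n P Q K).IsFourCycle u v w x := by
  intro h
  obtain ⟨k, hk, k', hk', hkk⟩ :=
    exists_sub_eq_sub_of_adj_of_adj hn h.adj_vw h.adj_xu.symm huv.symm hwx (huv ▸ huw)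
  have hne : x - w ≠ u - v :=
    sub_ne_sub_of_adj_of_adj hn hK hPQ hPQ' h.adj_wx h.adj_uv.symm hwx huv.symm (huv ▸ huw.symm)
  exact hoff k hk k' hk' (fun e => hne (sub_eq_zero.1 (by rw [hkk, e, sub_self])))
    _ (sub_mem_offsets_of_adj hn hK h.adj_wx hwx) _
    (sub_mem_offsets_of_adj hn hK h.adj_uv.symm huv.symm) hkk.symm

theorem not_isFourCycle_of_parity_alternates (hdiff : HasDistinctDifferences K)
    (huw : π u = π w) (hvx : π v = π x) (huv : π u ≠ π v) :
    ¬(SPQGraph n P Q K).IsFourCycle u v w x := by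
  intro h
  rcases ZMod.eq_zero_or_eq_one (π u) with hu | hu
  · have hv : π v = 1 := (ZMod.eq_zero_or_eq_one _).resolve_left (hu ▸ huv).symm
    exact hdiff _ (sub_mem_of_adj hn h.adj_uv hu hv) _
      (sub_mem_of_adj hn h.adj_vw.symm (huw ▸ hu) hv) _
      (sub_mem_of_adj hn h.adj_xu.symm hu (hvx ▸ hv)) _
      (sub_mem_of_adj hn h.adj_wx (huw ▸ hu) (hvx ▸ hv))
      (fun e => h.ne_uw (sub_right_inj.1 e)) (fun e => h.ne_uw (sub_right_inj.1 e))
      (fun e => h.ne_vx (sub_left_inj.1 (congrArg Prod.fst e))) (by ring)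
  · have hv : π v = 0 := (ZMod.eq_zero_or_eq_one _).resolve_right (hu ▸ huv).symm
    exact hdiff _ (sub_mem_of_adj hn h.adj_uv.symm hv hu) _
      (sub_mem_of_adj hn h.adj_vw hv (huw ▸ hu)) _
      (sub_mem_of_adj hn h.adj_xu (hvx ▸ hv) hu) _
      (sub_mem_of_adj hn h.adj_wx.symm (hvx ▸ hv) (huw ▸ hu))
      (fun e => h.ne_uw (sub_left_inj.1 e)) (fun e => h.ne_uw (sub_left_inj.1 e))
      (fun e => h.ne_vx (sub_right_inj.1 (congrArg Prod.fst e))) (by ring)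

theorem not_isFourCycle (hK : ∀ k ∈ K, π k = 1) (h4P : 4 * P ≠ 0) (h4Q : 4 * Q ≠ 0)
    (hPQ : P ≠ Q) (hPQ' : P ≠ -Q) (hdiff : HasDistinctDifferences K)
    (hoff : DifferencesAvoid K (offsets P Q)) : ¬(SPQGraph n P Q K).IsFourCycle u v w x := by
  intro h
  rcases ZMod.square_parity_cases (π u) (π v) (π w) (π x) with
    ⟨h₁, h₂, h₃⟩ | ⟨h₁, h₂, h₃⟩ | ⟨h₁, h₂, h₃⟩ | ⟨h₁, h₂, h₃⟩ | ⟨h₁, h₂, h₃⟩ | ⟨h₁, h₂, h₃⟩ |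
    ⟨h₁, h₂, h₃⟩ | ⟨h₁, h₂, h₃⟩
  · rcases ZMod.eq_zero_or_eq_one (π u) with hu | hu
    · exact h4P (four_mul_eq_zero_of_isFourCycle_of_even hn hK h hu (h₁ ▸ hu) (h₂ ▸ h₁ ▸ hu)
        (h₃ ▸ h₂ ▸ h₁ ▸ hu))
    · exact h4Q (four_mul_eq_zero_of_isFourCycle_of_odd hn hK h hu (h₁ ▸ hu) (h₂ ▸ h₁ ▸ hu)
        (h₃ ▸ h₂ ▸ h₁ ▸ hu))
  · exact not_isFourCycle_of_one_parity_differs hn hK hoff h₁ h₂ h₃ h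
  · exact not_isFourCycle_of_one_parity_differs hn hK hoff h₁ h₂ h₃ h.rotate
  · exact not_isFourCycle_of_one_parity_differs hn hK hoff h₁ h₂ h₃ h.rotate.rotate
  · exact not_isFourCycle_of_one_parity_differs hn hK hoff h₁ h₂ h₃ h.rotate.rotate.rotate
  · exact not_isFourCycle_of_two_parity_blocks hn hK hPQ hPQ' hoff h₁ h₂ h₃ h
  · exact not_isFourCycle_of_two_parity_blocks hn hK hPQ hPQ' hoff h₁ h₂ h₃ h.rotate
  · exact not_isFourCycle_of_parity_alternates hn hdiff h₁ h₂ h₃ h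

theorem adj_add_nsmul_of_even (hP : π P = 0) (hP0 : P ≠ 0) (hu : π u = 0) (m : ℕ) :
    (u + m • P) ∼ (u + (m + 1) • P) := by
  have hstep : u + (m + 1) • P - (u + m • P) = P := by rw [add_nsmul, one_nsmul]; abel
  refine (adj_or_eq_of_sub_mem_of_even hn hP
    (by rw [map_add, map_nsmul, hu, hP, smul_zero, add_zero])
    (by rw [hstep]; simp)).resolve_right fun e => hP0 ?_
  rw [← hstep, e, sub_self]

theorem adj_add_nsmul_of_odd (hQ : π Q = 0) (hQ0 : Q ≠ 0) (hu : π u = 1) (m : ℕ) :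
    (u + m • Q) ∼ (u + (m + 1) • Q) := by
  have hstep : u + (m + 1) • Q - (u + m • Q) = Q := by rw [add_nsmul, one_nsmul]; abel
  refine (adj_or_eq_of_sub_mem_of_odd hn hQ
    (by rw [map_add, map_nsmul, hu, hQ, smul_zero, add_zero])
    (by rw [hstep]; simp)).resolve_right fun e => hQ0 ?_
  rw [← hstep, e, sub_self]

theorem hasDistinctDifferences (hK : ∀ k ∈ K, π k = 1)
    (hsq : ∀ u v w x, ¬(SPQGraph n P Q K).IsFourCycle u v w x) : HasDistinctDifferences K := by
  intro a ha b hb c hc d hd hab _ hpair h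
  have hab0 : π (a - b) = 0 := by rw [map_sub, hK a ha, hK b hb, sub_self]
  refine hsq 0 a (a - b) c ⟨(sub_ne_zero.2 hab).symm, fun hac => hpair ?_,
    adj_of_sub_mem hn hK (map_zero _) (by rwa [sub_zero]),
    (adj_of_sub_mem hn hK hab0 (by rwa [sub_sub_cancel])).symm,
    adj_of_sub_mem hn hK hab0 (by rwa [h, sub_sub_cancel]),
    (adj_of_sub_mem hn hK (map_zero _) (by rwa [sub_zero])).symm⟩
  subst hac
  rw [sub_right_inj.1 h]

section Detours

variable {a b ω ω' : ZMod n}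

theorem sub_ne_sub_of_mem_of_even (hK : ∀ k ∈ K, π k = 1) (hP : π P = 0)
    (htri : ∀ u v w, u ∼ v → v ∼ w → ¬w ∼ u)
    (hsq : ∀ u v w x, ¬(SPQGraph n P Q K).IsFourCycle u v w x) (ha : a ∈ K) (hb : b ∈ K)
    (hab : a ≠ b) (hω : ω ∈ ({0, P, -P} : Set (ZMod n)))
    (hω' : ω' ∈ ({0, P, -P} : Set (ZMod n))) : a - b ≠ ω - ω' := by
  intro h
  have hω0 : π ω = 0 := by simpa using ZMod.castHom_eq_of_sub_mem hn hP (u := 0) (by simpa)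
  have hab0 : π (a - b) = 0 := by rw [map_sub, hK a ha, hK b hb, sub_self]
  exact SimpleGraph.false_of_adj_of_adj_of_detour htri hsq (x := a) (y := 0) (z := a - b)
    (adj_of_sub_mem hn hK (map_zero _) (by rwa [sub_zero])).symm
    (adj_of_sub_mem hn hK hab0 (by rwa [sub_sub_cancel])).symm
    (sub_ne_zero.2 hab).symm (mt (congrArg π) (by rw [hω0, hK a ha]; decide))
    (adj_or_eq_of_sub_mem_of_even hn hP (map_zero _) (by rwa [sub_zero]))
    (adj_or_eq_of_sub_mem_of_even hn hP hab0 (by rwa [h, sub_sub_cancel]))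

theorem sub_ne_sub_of_mem_of_odd (hK : ∀ k ∈ K, π k = 1) (hQ : π Q = 0)
    (htri : ∀ u v w, u ∼ v → v ∼ w → ¬w ∼ u)
    (hsq : ∀ u v w x, ¬(SPQGraph n P Q K).IsFourCycle u v w x) (ha : a ∈ K) (hb : b ∈ K)
    (hab : a ≠ b) (hω : ω ∈ ({0, Q, -Q} : Set (ZMod n)))
    (hω' : ω' ∈ ({0, Q, -Q} : Set (ZMod n))) : a - b ≠ ω - ω' := by
  intro h
  have hw : π (a + ω') = 1 := by
    rw [ZMod.castHom_eq_of_sub_mem hn hQ (u := a) (by rwa [add_sub_cancel_left]), hK a ha]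
  exact SimpleGraph.false_of_adj_of_adj_of_detour htri hsq (x := 0) (y := a) (z := b)
    (adj_of_sub_mem hn hK (map_zero _) (by rwa [sub_zero]))
    (adj_of_sub_mem hn hK (map_zero _) (by rwa [sub_zero]))
    hab (mt (congrArg π) (by rw [hw, map_zero]; decide))
    (adj_or_eq_of_sub_mem_of_odd hn hQ (hK a ha) (by rwa [add_sub_cancel_left]))
    (adj_or_eq_of_sub_mem_of_odd hn hQ (hK b hb)
      (by rwa [← sub_add_eq_add_sub, h, sub_add_cancel]))

theorem sub_ne_sub_of_mem_of_even_of_odd (hK : ∀ k ∈ K, π k = 1) (hP : π P = 0)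
    (hQ : π Q = 0) (htri : ∀ u v w, u ∼ v → v ∼ w → ¬w ∼ u)
    (hsq : ∀ u v w x, ¬(SPQGraph n P Q K).IsFourCycle u v w x) (ha : a ∈ K) (hb : b ∈ K)
    (hab : a ≠ b) (hω : ω ∈ ({0, P, -P} : Set (ZMod n)))
    (hω' : ω' ∈ ({0, Q, -Q} : Set (ZMod n))) : a - b ≠ ω - ω' := by
  rcases eq_or_ne ω 0 with rfl | hω0
  · exact sub_ne_sub_of_mem_of_odd hn hK hQ htri hsq ha hb hab (by simp) hω'
  intro h
  have hωe : π ω = 0 := by simpa using ZMod.castHom_eq_of_sub_mem hn hP (u := 0) (by simpa)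
  have hw : π (ω + b) = 1 := by rw [map_add, hωe, hK b hb, zero_add]
  exact SimpleGraph.false_of_adj_of_adj_of_detour htri hsq (x := 0) (y := a) (z := ω)
    (adj_of_sub_mem hn hK (map_zero _) (by rwa [sub_zero]))
    ((adj_or_eq_of_sub_mem_of_even hn hP (map_zero _) (by rwa [sub_zero])).resolve_right
      hω0.symm)
    (mt (congrArg π) (by rw [hK a ha, hωe]; decide))
    (mt (congrArg π) (by rw [hw, map_zero]; decide))
    (adj_or_eq_of_sub_mem_of_odd hn hQ (hK a ha)
      (by rwa [show ω + b - a = ω' by linear_combination -h]))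
    (.inl (adj_of_sub_mem hn hK hωe (by rwa [add_sub_cancel_left])))

end Detours

theorem differencesAvoid_offsets (hK : ∀ k ∈ K, π k = 1) (hP : π P = 0) (hQ : π Q = 0)
    (htri : ∀ u v w, u ∼ v → v ∼ w → ¬w ∼ u)
    (hsq : ∀ u v w x, ¬(SPQGraph n P Q K).IsFourCycle u v w x) :
    DifferencesAvoid K (offsets P Q) := by
  intro a ha b hb hab ω hω ω' hω'
  rcases mem_or_mem_of_mem_offsets hω with hω | hω <;>
    rcases mem_or_mem_of_mem_offsets hω' with hω' | hω'
  · exact sub_ne_sub_of_mem_of_even hn hK hP htri hsq ha hb hab hω hω'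
  · exact sub_ne_sub_of_mem_of_even_of_odd hn hK hP hQ htri hsq ha hb hab hω hω'
  · exact fun h => sub_ne_sub_of_mem_of_even_of_odd hn hK hP hQ htri hsq hb ha hab.symm hω' hω
      (by linear_combination -h)
  · exact sub_ne_sub_of_mem_of_odd hn hK hQ htri hsq ha hb hab hω hω'

theorem five_le_egirth_iff (hK : ∀ k ∈ K, π k = 1) (hP : π P = 0) (hQ : π Q = 0)
    (hP2 : 2 * P ≠ 0) (hQ2 : 2 * Q ≠ 0) (hPQ : P ≠ Q) (hPQ' : P ≠ -Q) :
    5 ≤ (SPQGraph n P Q K).egirth ↔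
      (3 * P ≠ 0 ∧ 4 * P ≠ 0 ∧ 3 * Q ≠ 0 ∧ 4 * Q ≠ 0) ∧ HasDistinctDifferences K ∧
        DifferencesAvoid K (offsets P Q) := by
  rw [SimpleGraph.five_le_egirth_iff]
  constructor
  · rintro ⟨htri, hsq⟩
    have hPstep := adj_add_nsmul_of_even hn (K := K) (Q := Q) hP (right_ne_zero_of_mul hP2)
      (map_zero _)
    have hQstep := adj_add_nsmul_of_odd hn (K := K) (P := P) hQ (right_ne_zero_of_mul hQ2)
      (map_one _)
    refine ⟨⟨?_, ?_, ?_, ?_⟩, hasDistinctDifferences hn hK hsq,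
      differencesAvoid_offsets hn hK hP hQ htri hsq⟩
    · simpa using SimpleGraph.three_nsmul_ne_zero_of_adj_add_nsmul htri hPstep
    · simpa using SimpleGraph.four_nsmul_ne_zero_of_adj_add_nsmul hsq hPstep (by simpa using hP2)
    · simpa using SimpleGraph.three_nsmul_ne_zero_of_adj_add_nsmul htri hQstep
    · simpa using SimpleGraph.four_nsmul_ne_zero_of_adj_add_nsmul hsq hQstep (by simpa using hQ2)
  · rintro ⟨⟨h3P, h4P, h3Q, h4Q⟩, hdiff, hoff⟩
    exact ⟨fun _ _ _ => not_adj_of_adj_of_adj hn hK h3P h3Q hoff,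
      fun _ _ _ _ => not_isFourCycle hn hK h4P h4Q hPQ hPQ' hdiff hoff⟩

end SPQGraph

theorem stmt6_general (t : ℕ) (P Q : ℕ)
    (hPe : Even P) (hQe : Even Q) (hP0 : 0 < P) (hPt : P < t)
    (hQ0 : 0 < Q) (hQt : Q < t) (hPQ : P ≠ Q)
    (K : Finset (ZMod (2 * t))) (hodd : ∀ k ∈ K, Odd k.val) :
    5 ≤ (SPQGraph (2 * t) (P : ZMod (2 * t)) (Q : ZMod (2 * t))
          (K : Set (ZMod (2 * t)))).egirth ↔
      ((((3 * P : ℕ) : ZMod (2 * t)) ≠ 0 ∧ (((4 * P : ℕ) : ZMod (2 * t)) ≠ 0) ∧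
        (((3 * Q : ℕ) : ZMod (2 * t)) ≠ 0) ∧ (((4 * Q : ℕ) : ZMod (2 * t)) ≠ 0)) ∧
       (∀ a ∈ K, ∀ b ∈ K, ∀ c ∈ K, ∀ d ∈ K,
          a ≠ b → c ≠ d → (a, b) ≠ (c, d) → a - b ≠ c - d) ∧
       (∀ a ∈ K, ∀ b ∈ K, a ≠ b →
          ∀ ω ∈ ({0, (P : ZMod (2 * t)), -(P : ZMod (2 * t)),
                  (Q : ZMod (2 * t)), -(Q : ZMod (2 * t))} : Set (ZMod (2 * t))),
          ∀ ω' ∈ ({0, (P : ZMod (2 * t)), -(P : ZMod (2 * t)),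
                  (Q : ZMod (2 * t)), -(Q : ZMod (2 * t))} : Set (ZMod (2 * t))),
            a - b ≠ ω - ω')) := by
  have hn : 2 ∣ 2 * t := dvd_mul_right 2 t
  have : NeZero (2 * t) := ⟨by omega⟩
  have cast_ne_zero (m : ℕ) (h0 : 0 < m) (h : m < 2 * t) : (m : ZMod (2 * t)) ≠ 0 := by
    rw [Ne, ZMod.natCast_eq_zero_iff]
    exact Nat.not_dvd_of_pos_of_lt h0 h
  have castHom_eq_zero (m : ℕ) (hm : Even m) : ZMod.castHom hn (ZMod 2) m = 0 := by
    rw [map_natCast, ZMod.natCast_eq_zero_iff_even]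
    exact hm
  push_cast
  refine SPQGraph.five_le_egirth_iff hn
    (fun k hk => (ZMod.odd_val_iff_castHom_eq_one hn k).1 (hodd k hk))
    (castHom_eq_zero P hPe) (castHom_eq_zero Q hQe)
    (by exact_mod_cast cast_ne_zero (2 * P) (by omega) (by omega))
    (by exact_mod_cast cast_ne_zero (2 * Q) (by omega) (by omega)) (fun h => hPQ ?_)
    (fun h => cast_ne_zero (P + Q) (by omega) (by omega) (by push_cast; rw [h, neg_add_cancel]))
  rwa [ZMod.natCast_eq_natCast_iff', Nat.mod_eq_of_lt (by omega), Nat.mod_eq_of_lt (by omega)] at h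

/-- S_{2t}(P,Q; k_1,…,k_w) has girth at least 5 iff (i) 3P, 4P, 3Q, 4Q ≠ 0 in Z_{2t};
(ii) all differences k_i − k_j (i ≠ j) are pairwise distinct;
(iii) no relation k_i − k_j = ω − ω′ with ω, ω′ ∈ {0, ±P, ±Q} (in particular
k_i − k_j ≠ 0 for i ≠ j). -/
theorem stmt6 (t : ℕ) (ht : 5 ≤ t) (P Q : ℕ)
    (hPe : Even P) (hQe : Even Q) (hP0 : 0 < P) (hPt : P < t)
    (hQ0 : 0 < Q) (hQt : Q < t) (hPQ : P ≠ Q)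
    (K : Finset (ZMod (2 * t))) (hodd : ∀ k ∈ K, Odd k.val) :
    5 ≤ (SPQGraph (2 * t) (P : ZMod (2 * t)) (Q : ZMod (2 * t))
          (K : Set (ZMod (2 * t)))).egirth ↔
      ((((3 * P : ℕ) : ZMod (2 * t)) ≠ 0 ∧ (((4 * P : ℕ) : ZMod (2 * t)) ≠ 0) ∧
        (((3 * Q : ℕ) : ZMod (2 * t)) ≠ 0) ∧ (((4 * Q : ℕ) : ZMod (2 * t)) ≠ 0)) ∧
       (∀ a ∈ K, ∀ b ∈ K, ∀ c ∈ K, ∀ d ∈ K,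
          a ≠ b → c ≠ d → (a, b) ≠ (c, d) → a - b ≠ c - d) ∧
       (∀ a ∈ K, ∀ b ∈ K, a ≠ b →
          ∀ ω ∈ ({0, (P : ZMod (2 * t)), -(P : ZMod (2 * t)),
                  (Q : ZMod (2 * t)), -(Q : ZMod (2 * t))} : Set (ZMod (2 * t))),
          ∀ ω' ∈ ({0, (P : ZMod (2 * t)), -(P : ZMod (2 * t)),
                  (Q : ZMod (2 * t)), -(Q : ZMod (2 * t))} : Set (ZMod (2 * t))),
            a - b ≠ ω - ω')) :=
  stmt6_general t P Q hPe hQe hP0 hPt hQ0 hQt hPQ K hodd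
end

section
/- Let P ≠ Q be even positive integers and k_1,…,k_w distinct odd integers such that the infinite graph S_∞(P,Q; k_1,…,k_w) has girth at least 5 and span D. Then for every t ≥ D+1, the finite graph S_{2t}(P,Q; k_1,…,k_w) has girth at least 5. -/
/-- The set of quantities whose maximum is the span of S_∞(P,Q; k_1,…,k_w). -/
def spanSet (P Q : ℤ) (K : Set ℤ) : Set ℤ :=
  {x | ∃ k ∈ K, x = |k|} ∪ {x | ∃ a ∈ K, ∃ b ∈ K, x = |a - b|} ∪
  {x | ∃ ω ∈ ({0, P, -P, Q, -Q} : Set ℤ), ∃ ω' ∈ ({0, P, -P, Q, -Q} : Set ℤ),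
    x = |ω - ω'|}

open SimpleGraph

namespace SimpleGraph.Walk

variable {V W : Type*} {G : SimpleGraph V} {H : SimpleGraph W}

theorem abs_sub_le_mul_length (f : V → ℤ) {D : ℤ}
    (hf : ∀ x y, G.Adj x y → |f y - f x| ≤ D) {u v : V} (p : G.Walk u v) :
    |f v - f u| ≤ D * p.length := by
  induction p with
  | nil => simp
  | @cons u v w h p ih =>
    have := hf u v h
    have := abs_sub_le (f w) (f v) (f u)
    push_cast [length_cons]
    linarith

theorem exists_lift (f : V → W) (hf : ∀ u y, H.Adj (f u) y → ∃ v, f v = y ∧ G.Adj u v)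
    {x y : W} (w : H.Walk x y) (u : V) (hu : f u = x) :
    ∃ v, ∃ p : G.Walk u v, f v = y ∧ p.support.map f = w.support ∧
      p.edges.map (Sym2.map f) = w.edges := by
  induction w generalizing u with
  | nil => exact ⟨u, nil, hu, by simp [hu], by simp⟩
  | cons h w ih =>
    subst hu
    obtain ⟨v, rfl, huv⟩ := hf u _ h
    obtain ⟨v', p, hv', hs, he⟩ := ih v rfl
    exact ⟨v', cons huv p, hv', by simp [hs], by simp [he]⟩

theorem IsCycle.of_map_support_edges {f : V → W} {u : V} {p : G.Walk u u} {x : W}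
    {w : H.Walk x x} (hw : w.IsCycle) (hs : p.support.map f = w.support)
    (he : p.edges.map (Sym2.map f) = w.edges) : p.IsCycle := by
  refine (isCycle_def p).2 ⟨⟨(he ▸ hw.edges_nodup).of_map _⟩, ?_, ?_⟩
  · rintro rfl
    have := hw.three_le_length
    simp [← length_edges, ← he] at this
  · have := hw.support_nodup
    rw [← hs, ← List.map_tail] at this
    exact this.of_map f

end SimpleGraph.Walk

lemma even_val_intCast {n : ℕ} [NeZero n] (hn : 2 ∣ n) (x : ℤ) :
    Even (x : ZMod n).val ↔ Even x := by
  rw [← Int.even_coe_nat, ZMod.val_intCast, Int.even_iff, Int.even_iff,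
    Int.emod_emod_of_dvd x (by exact_mod_cast hn)]

lemma odd_val_intCast {n : ℕ} [NeZero n] (hn : 2 ∣ n) (x : ℤ) :
    Odd (x : ZMod n).val ↔ Odd x := by
  rw [← Nat.not_even_iff_odd, ← Int.not_even_iff_odd, even_val_intCast hn]

lemma SPQGraph.exists_adj_lift {n : ℕ} [NeZero n] (hn : 2 ∣ n) {P Q : ℤ} {K : Set ℤ}
    {A : ℤ} {b : ZMod n} (h : (SPQGraph n P Q {x | ∃ k ∈ K, x = k}).Adj A b) :
    ∃ B : ℤ, (B : ZMod n) = b ∧ (SPQGraphZ P Q K).Adj A B := by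
  obtain ⟨hne, h⟩ := h
  have ne_of_cast : ∀ B : ℤ, (B : ZMod n) = b → A ≠ B := by
    rintro B rfl rfl
    exact hne rfl
  have even_of_cast : ∀ B : ℤ, (B : ZMod n) = b → Even b.val → Even B := by
    rintro B rfl
    exact (even_val_intCast hn B).1
  have odd_of_cast : ∀ B : ℤ, (B : ZMod n) = b → Odd b.val → Odd B := by
    rintro B rfl
    exact (odd_val_intCast hn B).1
  rcases h with (⟨ha, k, hk, hab⟩ | ⟨hb, k, hk, hab⟩) | ⟨ha, hb, hab | hab⟩ |
    ⟨ha, hb, hab | hab⟩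
  · have hB : ((A + k : ℤ) : ZMod n) = b := by push_cast; linear_combination -hab
    refine ⟨_, hB, ne_of_cast _ hB, Or.inl (Or.inl ⟨(even_val_intCast hn A).1 ha, ?_⟩)⟩
    simpa using hk
  · have hB : ((A - k : ℤ) : ZMod n) = b := by push_cast; linear_combination hab
    refine ⟨_, hB, ne_of_cast _ hB, Or.inl (Or.inr ⟨even_of_cast _ hB hb, ?_⟩)⟩
    simpa using hk
  · have hB : ((A + P : ℤ) : ZMod n) = b := by push_cast; linear_combination -hab
    exact ⟨_, hB, ne_of_cast _ hB, Or.inr (Or.inl ⟨(even_val_intCast hn A).1 ha,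
      even_of_cast _ hB hb, Or.inl (by ring)⟩)⟩
  · have hB : ((A - P : ℤ) : ZMod n) = b := by push_cast; linear_combination hab
    exact ⟨_, hB, ne_of_cast _ hB, Or.inr (Or.inl ⟨(even_val_intCast hn A).1 ha,
      even_of_cast _ hB hb, Or.inr (by ring)⟩)⟩
  · have hB : ((A + Q : ℤ) : ZMod n) = b := by push_cast; linear_combination -hab
    exact ⟨_, hB, ne_of_cast _ hB, Or.inr (Or.inr ⟨(odd_val_intCast hn A).1 ha,
      odd_of_cast _ hB hb, Or.inl (by ring)⟩)⟩
  · have hB : ((A - Q : ℤ) : ZMod n) = b := by push_cast; linear_combination hab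
    exact ⟨_, hB, ne_of_cast _ hB, Or.inr (Or.inr ⟨(odd_val_intCast hn A).1 ha,
      odd_of_cast _ hB hb, Or.inr (by ring)⟩)⟩

/-- A `K`-edge `X → X + k` of `S_∞` changes `shiftedDouble c` by `2k - c`, a `P`- or `Q`-edge
by `±2P` or `±2Q`. -/
def shiftedDouble (c X : ℤ) : ℤ := 2 * X - if Even X then 0 else c

lemma shiftedDouble_sub_shiftedDouble (c : ℤ) {X Y : ℤ} (h : Even (Y - X)) :
    shiftedDouble c Y - shiftedDouble c X = 2 * (Y - X) := by
  have hXY : Even Y ↔ Even X := by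
    simpa [Int.even_sub] using h
  by_cases hX : Even X <;> simp [shiftedDouble, hX, hXY] <;> ring

lemma SPQGraphZ.abs_shiftedDouble_sub_le {P Q c D : ℤ} {K : Set ℤ} (hodd : ∀ k ∈ K, Odd k)
    (hP : 2 * |P| ≤ D) (hQ : 2 * |Q| ≤ D) (hK : ∀ k ∈ K, |2 * k - c| ≤ D) {X Y : ℤ}
    (h : (SPQGraphZ P Q K).Adj X Y) : |shiftedDouble c Y - shiftedDouble c X| ≤ D := by
  obtain ⟨-, h⟩ := h
  rcases h with (⟨hX, hk⟩ | ⟨hY, hk⟩) | ⟨hX, hY, hXY⟩ | ⟨hX, hY, hXY⟩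
  · have hY : ¬ Even Y := by
      rw [Int.not_even_iff_odd, show Y = X + (Y - X) by ring]
      exact hX.add_odd (hodd _ hk)
    have := abs_le.1 (hK _ hk)
    simp only [shiftedDouble, if_pos hX, if_neg hY]
    exact abs_le.2 ⟨by omega, by omega⟩
  · have hX : ¬ Even X := by
      rw [Int.not_even_iff_odd, show X = Y + (X - Y) by ring]
      exact hY.add_odd (hodd _ hk)
    have := abs_le.1 (hK _ hk)
    simp only [shiftedDouble, if_pos hY, if_neg hX]
    exact abs_le.2 ⟨by omega, by omega⟩
  · rw [shiftedDouble_sub_shiftedDouble c (hY.sub hX)]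
    have := le_abs_self P
    have := neg_abs_le P
    exact abs_le.2 ⟨by omega, by omega⟩
  · rw [shiftedDouble_sub_shiftedDouble c (hY.sub_odd hX)]
    have := le_abs_self Q
    have := neg_abs_le Q
    exact abs_le.2 ⟨by omega, by omega⟩

lemma le_of_mem_upperBounds_spanSet {P Q D : ℤ} {K : Set ℤ}
    (hD : D ∈ upperBounds (spanSet P Q K)) :
    0 ≤ D ∧ 2 * |P| ≤ D ∧ 2 * |Q| ≤ D ∧ ∀ a ∈ K, ∀ b ∈ K, |a - b| ≤ D := by
  refine ⟨?_, ?_, ?_, fun a ha b hb => hD (Or.inl (Or.inr ⟨a, ha, b, hb, rfl⟩))⟩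
  · simpa using hD (Or.inr ⟨0, by simp, 0, by simp, rfl⟩)
  · simpa [← two_mul, abs_mul] using hD (Or.inr ⟨P, by simp, -P, by simp, rfl⟩)
  · simpa [← two_mul, abs_mul] using hD (Or.inr ⟨Q, by simp, -Q, by simp, rfl⟩)

lemma Finset.exists_abs_two_mul_sub_le {K : Finset ℤ} {D : ℤ}
    (h : ∀ a ∈ K, ∀ b ∈ K, |a - b| ≤ D) : ∃ c, ∀ k ∈ K, |2 * k - c| ≤ D := by
  rcases K.eq_empty_or_nonempty with rfl | hK
  · exact ⟨0, by simp⟩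
  refine ⟨K.min' hK + K.max' hK, fun k hk => abs_le.2 ?_⟩
  have := K.min'_le k hk
  have := K.le_max' k hk
  have := (abs_le.1 (h _ (K.max'_mem hK) _ (K.min'_mem hK))).2
  constructor <;> omega

lemma SPQGraphZ.two_mul_abs_sub_le_mul_length {P Q D : ℤ} {K : Finset ℤ}
    (hodd : ∀ k ∈ K, Odd k) (hP : 2 * |P| ≤ D) (hQ : 2 * |Q| ≤ D)
    (hK : ∀ a ∈ K, ∀ b ∈ K, |a - b| ≤ D) {A B : ℤ} (p : (SPQGraphZ P Q K).Walk A B)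
    (hAB : Even (B - A)) : 2 * |B - A| ≤ D * p.length := by
  obtain ⟨c, hc⟩ := Finset.exists_abs_two_mul_sub_le hK
  have := p.abs_sub_le_mul_length (shiftedDouble c)
    (fun _ _ => SPQGraphZ.abs_shiftedDouble_sub_le hodd hP hQ hc)
  rwa [shiftedDouble_sub_shiftedDouble c hAB, abs_mul, abs_two] at this

theorem stmt9_general (P Q D : ℤ) (K : Finset ℤ) (hodd : ∀ k ∈ K, Odd k)
    (hgirth : 5 ≤ (SPQGraphZ P Q (K : Set ℤ)).egirth)
    (hspan : IsGreatest (spanSet P Q (K : Set ℤ)) D) :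
    ∀ t : ℕ, D + 1 ≤ (t : ℤ) →
      5 ≤ (SPQGraph (2 * t) ((P : ZMod (2 * t))) ((Q : ZMod (2 * t)))
        {x : ZMod (2 * t) | ∃ k ∈ K, x = (k : ZMod (2 * t))}).egirth := by
  intro t ht
  obtain ⟨hD, hP, hQ, hK⟩ := le_of_mem_upperBounds_spanSet hspan.2
  have : NeZero (2 * t) := ⟨by omega⟩
  refine le_egirth.2 fun a w hw => ?_
  by_contra! hshort
  obtain ⟨A, rfl⟩ := ZMod.intCast_surjective a
  obtain ⟨B, p, hBA, hs, he⟩ := w.exists_lift Int.cast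
    (fun _ _ h => SPQGraph.exists_adj_lift (dvd_mul_right 2 t) h) A rfl
  have hlen : p.length = w.length := by simpa using congrArg List.length he
  have hlen4 : (p.length : ℤ) ≤ 4 := by
    have : w.length < 5 := by exact_mod_cast hshort
    omega
  have hdvd : 2 * (t : ℤ) ∣ B - A := by
    exact_mod_cast (ZMod.intCast_eq_intCast_iff_dvd_sub _ _ _).1 hBA.symm
  have hdisp := SPQGraphZ.two_mul_abs_sub_le_mul_length hodd hP hQ hK p
    (even_iff_two_dvd.2 ((dvd_mul_right 2 _).trans hdvd))
  -- the lifted walk is closed: its endpoints are congruent modulo `2t` but less than `2t` apart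
  obtain rfl : B = A := by
    refine sub_eq_zero.1 (Int.eq_zero_of_abs_lt_dvd hdvd ?_)
    nlinarith
  have := le_egirth.1 hgirth B p (hw.of_map_support_edges hs he)
  rw [hlen] at this
  exact hshort.not_ge this

/-- If S_∞(P,Q; k_1,…,k_w) has girth at least 5 and span D, then for every
t ≥ D + 1 the finite graph S_{2t}(P,Q; k_1,…,k_w) has girth at least 5. -/
theorem stmt9 (P Q D : ℤ) (hPe : Even P) (hQe : Even Q)
    (hP0 : 0 < P) (hQ0 : 0 < Q) (hPQ : P ≠ Q)
    (K : Finset ℤ) (hodd : ∀ k ∈ K, Odd k)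
    (hgirth : 5 ≤ (SPQGraphZ P Q (K : Set ℤ)).egirth)
    (hspan : IsGreatest (spanSet P Q (K : Set ℤ)) D) :
    ∀ t : ℕ, D + 1 ≤ (t : ℤ) →
      5 ≤ (SPQGraph (2 * t) ((P : ZMod (2 * t))) ((Q : ZMod (2 * t)))
        {x : ZMod (2 * t) | ∃ k ∈ K, x = (k : ZMod (2 * t))}).egirth :=
  stmt9_general P Q D K hodd hgirth hspan
end
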